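/- arXiv:1606.02408 — 5 statements merged into one kernel-verified Lean document; each statement's English description precedes it below -/
import Mathlib

section
/- Let G be a finite group acting on a finite set Ω of size n. Let {f₁,...,f_r} be the set of values f(g) = |Fix(g)| for non-identity elements g of G. Then |G| divides the product (n - f₁)(n - f₂)···(n - f_r). -/
open MulAction

/-- Fixed points of `g` on `Fin k → Ω` are `k`-tuples of fixed points. -/
def fixedByPiEquiv (G : Type*) [Group G] (Ω : Type*) [MulAction G Ω] (g : G) (k : ℕ) :
    (fixedBy (Fin k → Ω) g) ≃ (Fin k → fixedBy Ω g) where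
  toFun f i := ⟨f.1 i, congrFun f.2 i⟩
  invFun F := ⟨fun i => (F i).1, funext fun i => (F i).2⟩
  left_inv f := rfl
  right_inv F := rfl

lemma blichfeldt_key (G : Type*) [Group G] [Fintype G] (Ω : Type*) [Fintype Ω]
    [MulAction G Ω] (k : ℕ) :
    Fintype.card G ∣ ∑ g : G, (Nat.card (fixedBy Ω g)) ^ k := by
  classical
  have hB := MulAction.sum_card_fixedBy_eq_card_orbits_mul_card_group G (Fin k → Ω)
  refine ⟨Fintype.card (Quotient (orbitRel G (Fin k → Ω))), ?_⟩
  rw [mul_comm, ← hB]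
  refine Finset.sum_congr rfl fun g _ => ?_
  rw [← Nat.card_eq_fintype_card, Nat.card_congr (fixedByPiEquiv G Ω g k), Nat.card_fun]
  simp


/-- **Blichfeldt's Theorem.** If `{f₁,…,f_r}` is the set of fixed-point counts of
non-identity elements of a finite group `G` acting on a finite set `Ω` of size `n`,
then `|G|` divides `(n - f₁)⋯(n - f_r)`. -/
theorem blichfeldt (G : Type*) [Group G] [Fintype G] (Ω : Type*) [Fintype Ω]
    [MulAction G Ω] (n : ℕ) (hn : Fintype.card Ω = n)
    (F : Finset ℕ)
    (hF : ∀ m : ℕ, m ∈ F ↔ ∃ g : G, g ≠ 1 ∧ Nat.card (fixedBy Ω g) = m) :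
    Fintype.card G ∣ ∏ m ∈ F, (n - m) := by
  classical
  set c : G → ℤ := fun g => (Nat.card (fixedBy Ω g) : ℤ) with hc
  -- divisibility of the polynomial sum
  set P : Polynomial ℤ := ∏ m ∈ F, (Polynomial.X - Polynomial.C (m : ℤ)) with hP
  have hdvd : (Fintype.card G : ℤ) ∣ ∑ g : G, P.eval (c g) := by
    have heval : ∀ g : G, P.eval (c g) =
        ∑ i ∈ Finset.range (P.natDegree + 1), P.coeff i * c g ^ i := fun g =>
      Polynomial.eval_eq_sum_range _
    calc (Fintype.card G : ℤ) ∣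
        ∑ i ∈ Finset.range (P.natDegree + 1), P.coeff i * ∑ g : G, c g ^ i := by
          refine Finset.dvd_sum fun i _ => Dvd.dvd.mul_left ?_ _
          have : ∑ g : G, c g ^ i = ((∑ g : G, (Nat.card (fixedBy Ω g)) ^ i : ℕ) : ℤ) := by
            push_cast; rfl
          rw [this]
          exact_mod_cast blichfeldt_key G Ω i
      _ = ∑ g : G, P.eval (c g) := by
          simp_rw [heval, Finset.mul_sum]
          rw [Finset.sum_comm]
  -- the sum collapses to the value at the identity
  have hsum : ∑ g : G, P.eval (c g) = ∏ m ∈ F, ((n : ℤ) - m) := by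
    rw [Finset.sum_eq_single (1 : G)]
    · have h1 : c 1 = (n : ℤ) := by
        have h : Nat.card (fixedBy Ω (1 : G)) = n := by
          rw [fixedBy_one_eq_univ, Nat.card_univ, Nat.card_eq_fintype_card, hn]
        show ((Nat.card (fixedBy Ω (1 : G)) : ℤ)) = (n : ℤ); exact_mod_cast h
      simp [hP, Polynomial.eval_prod, h1]
    · intro g _ hg
      have hm : Nat.card (fixedBy Ω g) ∈ F := (hF _).2 ⟨g, hg, rfl⟩
      rw [hP, Polynomial.eval_prod]
      exact Finset.prod_eq_zero hm (by simp [hc])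
    · simp
  rw [hsum] at hdvd
  have hle : ∀ m ∈ F, m ≤ n := by
    intro m hm
    obtain ⟨g, -, rfl⟩ := (hF m).1 hm
    calc Nat.card (fixedBy Ω g) ≤ Nat.card Ω :=
          Nat.card_le_card_of_injective _ Subtype.val_injective
      _ = n := by rw [Nat.card_eq_fintype_card, hn]
  have : ∏ m ∈ F, ((n : ℤ) - m) = ((∏ m ∈ F, (n - m) : ℕ) : ℤ) := by
    rw [Nat.cast_prod]
    exact Finset.prod_congr rfl fun m hm => by
      rw [Nat.cast_sub (hle m hm)]
  rw [this] at hdvd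
  exact_mod_cast hdvd
end

section
/- Let G be a finite group acting on a finite set Ω of size n. Let {f₁,...,f_r} be the set of values |Fix(H)| as H ranges over all non-trivial subgroups of G. Then |G| divides the product (n - f₁)(n - f₂)···(n - f_r). -/
open MulAction

section Aux

variable {G : Type*} [Group G] [Fintype G] {Ω : Type*} [Fintype Ω] [MulAction G Ω]

omit [Fintype G] [Fintype Ω] in
private lemma maillet_card_fixedBy_pi (g : G) (k : ℕ) :
    Nat.card (fixedBy (Fin k → Ω) g) = Nat.card (fixedBy Ω g) ^ k := by
  have e : fixedBy (Fin k → Ω) g ≃ (Fin k → fixedBy Ω g) :=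
    { toFun := fun f i => ⟨f.1 i, congrFun f.2 i⟩
      invFun := fun h => ⟨fun i => (h i).1, funext fun i => (h i).2⟩
      left_inv := fun f => rfl
      right_inv := fun h => rfl }
  rw [Nat.card_congr e, Nat.card_pi, Finset.prod_const, Finset.card_univ,
    Fintype.card_fin]

private lemma maillet_dvd_sum_pow (k : ℕ) :
    (Fintype.card G : ℤ) ∣ ∑ g : G, ((Nat.card (fixedBy Ω g) : ℤ)) ^ k := by
  classical
  have h : ∑ g : G, (Nat.card (fixedBy Ω g)) ^ k
      = ∑ g : G, Nat.card (fixedBy (Fin k → Ω) g) :=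
    Finset.sum_congr rfl fun g _ => (maillet_card_fixedBy_pi g k).symm
  have hb : (∑ g : G, Fintype.card (fixedBy (Fin k → Ω) g))
      = Fintype.card (Quotient (orbitRel G (Fin k → Ω))) * Fintype.card G :=
    MulAction.sum_card_fixedBy_eq_card_orbits_mul_card_group G (Fin k → Ω)
  have h2 : ∑ g : G, Nat.card (fixedBy (Fin k → Ω) g)
      = Fintype.card (Quotient (orbitRel G (Fin k → Ω))) * Fintype.card G := by
    rw [← hb]; simp [Nat.card_eq_fintype_card]
  have : (Fintype.card G : ℤ) ∣ ((∑ g : G, (Nat.card (fixedBy Ω g)) ^ k : ℕ) : ℤ) := by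
    rw [h, h2]; exact Int.natCast_dvd_natCast.mpr (dvd_mul_left _ _)
  simpa using this

end Aux

/-- **Maillet's Theorem.** If `{f₁,…,f_r}` is the set of values `|Fix(H)|` over
non-trivial subgroups `H` of a finite group `G` acting on a finite set `Ω` of size `n`,
then `|G|` divides `(n - f₁)⋯(n - f_r)`. -/
theorem maillet (G : Type*) [Group G] [Fintype G] (Ω : Type*) [Fintype Ω]
    [MulAction G Ω] (n : ℕ) (hn : Fintype.card Ω = n)
    (F : Finset ℕ)
    (hF : ∀ m : ℕ, m ∈ F ↔ ∃ H : Subgroup G, H ≠ ⊥ ∧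
      Nat.card {x : Ω | ∀ g ∈ H, g • x = x} = m) :
    Fintype.card G ∣ ∏ m ∈ F, (n - m) := by
  classical
  set c : G → ℕ := fun g => Nat.card (fixedBy Ω g) with hc
  -- every value of c at a nontrivial element lies in F
  have hmem : ∀ g : G, g ≠ 1 → c g ∈ F := by
    intro g hg
    rw [hF]
    refine ⟨Subgroup.zpowers g, ?_, ?_⟩
    · simpa [Subgroup.zpowers_eq_bot] using hg
    · have hset : {x : Ω | ∀ h ∈ Subgroup.zpowers g, h • x = x} = fixedBy Ω g := by
        ext x
        constructor
        · intro hx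
          exact hx g (Subgroup.mem_zpowers g)
        · intro hx h hh
          have : Subgroup.zpowers g ≤ MulAction.stabilizer G x := by
            rw [Subgroup.zpowers_le]
            exact hx
          exact this hh
      rw [hset]
  -- c 1 = n
  have hc1 : c 1 = n := by
    have : fixedBy Ω (1 : G) = Set.univ := by
      ext x; simp [MulAction.mem_fixedBy]
    rw [hc]
    simp only [this]
    rw [Nat.card_coe_set_eq, Set.ncard_univ, Nat.card_eq_fintype_card, hn]
  -- every element of F is at most n
  have hle : ∀ m ∈ F, m ≤ n := by
    intro m hm
    rw [hF] at hm
    obtain ⟨H, -, hHm⟩ := hm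
    rw [← hHm, ← hn, ← Nat.card_eq_fintype_card]
    exact Nat.card_le_card_of_injective _ Subtype.val_injective
  -- the polynomial
  set P : Polynomial ℤ := ∏ m ∈ F, (Polynomial.X - Polynomial.C (m : ℤ)) with hP
  have heval : ∀ g : G, g ≠ 1 → P.eval ((c g : ℤ)) = 0 := by
    intro g hg
    rw [hP]
    simp only [Polynomial.eval_prod, Polynomial.eval_sub, Polynomial.eval_X,
      Polynomial.eval_C]
    exact Finset.prod_eq_zero (hmem g hg) (by ring)
  have hsum : ∑ g : G, P.eval ((c g : ℤ)) = P.eval ((n : ℤ)) := by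
    rw [Fintype.sum_eq_single (1 : G) (fun g hg => heval g hg), hc1]
  have hswap : ∑ g : G, P.eval ((c g : ℤ))
      = ∑ k ∈ Finset.range (P.natDegree + 1), P.coeff k * ∑ g : G, ((c g : ℤ)) ^ k := by
    simp_rw [Polynomial.eval_eq_sum_range, Finset.mul_sum]
    rw [Finset.sum_comm]
  have hdvd : (Fintype.card G : ℤ) ∣ P.eval ((n : ℤ)) := by
    rw [← hsum, hswap]
    exact Finset.dvd_sum fun k _ => Dvd.dvd.mul_left (maillet_dvd_sum_pow k) _
  have hPn : P.eval ((n : ℤ)) = ((∏ m ∈ F, (n - m) : ℕ) : ℤ) := by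
    rw [hP]
    simp only [Polynomial.eval_prod, Polynomial.eval_sub, Polynomial.eval_X,
      Polynomial.eval_C, Nat.cast_prod]
    exact Finset.prod_congr rfl fun m hm => by rw [Nat.cast_sub (hle m hm)]
  rw [hPn] at hdvd
  exact_mod_cast hdvd
end

section
/- Let G be a finite group acting on a finite set Ω of size n, and let {f₁,...,f_r} be the set of values f(g) for non-identity elements g of G of prime power order. Then |G| divides (n - f₁)···(n - f_r). -/
open MulAction

/-- Burnside-type divisibility for powers of the fixed-point count. -/
lemma blich_aux_pow (H : Type*) [Group H] [Fintype H] (Ω : Type*) [Fintype Ω]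
    [MulAction H Ω] (k : ℕ) :
    (Fintype.card H : ℤ) ∣ ∑ g : H, ((Nat.card (fixedBy Ω g) : ℤ) ^ k) := by
  classical
  -- action on `Fin k → Ω`
  have key : ∀ g : H, Nat.card (fixedBy (Fin k → Ω) g) = (Nat.card (fixedBy Ω g)) ^ k := by
    intro g
    have e : fixedBy (Fin k → Ω) g ≃ (Fin k → fixedBy Ω g) :=
      { toFun := fun f i => ⟨f.1 i, congrFun f.2 i⟩
        invFun := fun f => ⟨fun i => (f i).1, funext fun i => (f i).2⟩
        left_inv := fun f => Subtype.ext rfl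
        right_inv := fun f => rfl }
    rw [Nat.card_congr e, Nat.card_fun, Nat.card_eq_fintype_card (α := Fin k), Fintype.card_fin]
  letI : ∀ g : H, Fintype (fixedBy (Fin k → Ω) g) := fun g => Fintype.ofFinite _
  have burnside := MulAction.sum_card_fixedBy_eq_card_orbits_mul_card_group H (Fin k → Ω)
  have : (∑ g : H, (Nat.card (fixedBy Ω g)) ^ k)
      = Fintype.card (Quotient (orbitRel H (Fin k → Ω))) * Fintype.card H := by
    rw [← burnside]
    refine Finset.sum_congr rfl fun g _ => ?_
    rw [← key g, Nat.card_eq_fintype_card]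
  have hdvd : (Fintype.card H : ℕ) ∣ ∑ g : H, (Nat.card (fixedBy Ω g)) ^ k := by
    rw [this]; exact dvd_mul_left _ _
  have := Int.natCast_dvd_natCast.mpr hdvd
  simpa using this

/-- Burnside-type divisibility for the product `∏ (f(g) - m)`. -/
lemma blich_aux_prod (H : Type*) [Group H] [Fintype H] (Ω : Type*) [Fintype Ω]
    [MulAction H Ω] (F : Finset ℕ) :
    (Fintype.card H : ℤ) ∣ ∑ g : H, ∏ m ∈ F, ((Nat.card (fixedBy Ω g) : ℤ) - m) := by
  classical
  set q : Polynomial ℤ := ∏ m ∈ F, (Polynomial.X - Polynomial.C (m : ℤ)) with hq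
  have heval : ∀ x : ℤ, ∏ m ∈ F, (x - m) = q.eval x := by
    intro x; simp [hq, Polynomial.eval_prod]
  have hsum : (∑ g : H, ∏ m ∈ F, ((Nat.card (fixedBy Ω g) : ℤ) - m))
      = ∑ i ∈ Finset.range (q.natDegree + 1),
          q.coeff i * ∑ g : H, ((Nat.card (fixedBy Ω g) : ℤ)) ^ i := by
    have hterm : ∀ g : H, ∏ m ∈ F, ((Nat.card (fixedBy Ω g) : ℤ) - m)
        = ∑ i ∈ Finset.range (q.natDegree + 1),
            q.coeff i * ((Nat.card (fixedBy Ω g) : ℤ)) ^ i := fun g => by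
      rw [heval, Polynomial.eval_eq_sum_range]
    rw [Finset.sum_congr rfl fun g _ => hterm g, Finset.sum_comm]
    simp [Finset.mul_sum]
  rw [hsum]
  refine Finset.dvd_sum fun i _ => ?_
  exact Dvd.dvd.mul_left (blich_aux_pow H Ω i) _

/-- Refinement of Blichfeldt's theorem: if `{f₁,…,f_r}` is the set of fixed-point
counts of non-identity elements of prime power order, then `|G|` divides
`(n - f₁)⋯(n - f_r)`. -/
theorem blichfeldt_primePow (G : Type*) [Group G] [Fintype G] (Ω : Type*) [Fintype Ω]
    [MulAction G Ω] (n : ℕ) (hn : Fintype.card Ω = n)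
    (F : Finset ℕ)
    (hF : ∀ m : ℕ, m ∈ F ↔ ∃ g : G, g ≠ 1 ∧ IsPrimePow (orderOf g) ∧
      Nat.card (fixedBy Ω g) = m) :
    Fintype.card G ∣ ∏ m ∈ F, (n - m) := by
  classical
  -- every `m ∈ F` satisfies `m ≤ n`
  have hle : ∀ m ∈ F, m ≤ n := by
    intro m hm
    obtain ⟨g, -, -, rfl⟩ := (hF m).mp hm
    calc Nat.card (fixedBy Ω g) ≤ Nat.card Ω := by
          exact Nat.card_le_card_of_injective _ Subtype.val_injective
      _ = n := by rw [Nat.card_eq_fintype_card, hn]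
  -- main claim in ℤ
  have hcast : ((∏ m ∈ F, (n - m) : ℕ) : ℤ) = ∏ m ∈ F, ((n : ℤ) - m) := by
    rw [Nat.cast_prod]
    exact Finset.prod_congr rfl fun m hm => by
      rw [Nat.cast_sub (hle m hm)]
  -- reduce to prime power divisibility
  rcases eq_or_ne (∏ m ∈ F, (n - m)) 0 with h0 | h0
  · rw [h0]; exact dvd_zero _
  have hGpos : Fintype.card G ≠ 0 := Fintype.card_ne_zero
  rw [← Nat.factorization_le_iff_dvd hGpos h0, Finsupp.le_def]
  intro p
  by_cases hp : p.Prime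
  · -- Sylow argument
    haveI : Fact p.Prime := ⟨hp⟩
    obtain ⟨P⟩ : Nonempty (Sylow p G) := inferInstance
    have hcardP : Nat.card P = p ^ (Nat.card G).factorization p := Sylow.card_eq_multiplicity P
    letI : Fintype (P : Subgroup G) := Fintype.ofFinite _
    -- each nontrivial element of P gives a zero factor
    have hvanish : ∀ g : (P : Subgroup G), g ≠ 1 →
        (∏ m ∈ F, ((Nat.card (fixedBy Ω g) : ℤ) - m)) = 0 := by
      intro g hg
      have hfix : fixedBy Ω g = fixedBy Ω (g : G) := rfl
      have hmem : Nat.card (fixedBy Ω (g : G)) ∈ F := by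
        rw [hF]
        refine ⟨(g : G), ?_, ?_, rfl⟩
        · simpa using hg
        · have horder : orderOf (g : G) = orderOf g :=
            (orderOf_injective (P.1.subtype) Subtype.val_injective g)
          have hdvd : orderOf g ∣ Nat.card P := orderOf_dvd_natCard g
          rw [hcardP] at hdvd
          obtain ⟨j, hj, hje⟩ := (Nat.dvd_prime_pow hp).mp hdvd
          refine ⟨p, j, hp.prime, ?_, by rw [horder, hje]⟩
          rcases Nat.eq_zero_or_pos j with hj' | hj'
          · exfalso; apply hg
            rw [hj', pow_zero] at hje
            exact orderOf_eq_one_iff.mp hje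
          · exact hj'
      refine Finset.prod_eq_zero hmem ?_
      rw [hfix]; ring
    -- the sum over P collapses to the identity term
    have hsum : (∑ g : (P : Subgroup G), ∏ m ∈ F, ((Nat.card (fixedBy Ω g) : ℤ) - m))
        = ∏ m ∈ F, ((n : ℤ) - m) := by
      rw [Finset.sum_eq_single_of_mem (1 : (P : Subgroup G)) (Finset.mem_univ _)
        (fun g _ hg => hvanish g hg)]
      have h1 : fixedBy Ω ((1 : (P : Subgroup G))) = (Set.univ : Set Ω) := by
        rw [show fixedBy Ω ((1 : (P : Subgroup G))) = fixedBy Ω ((1 : (P : Subgroup G)) : G) from rfl]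
        simp [MulAction.fixedBy_one_eq_univ]
      rw [h1]
      refine Finset.prod_congr rfl fun m _ => ?_
      have : Nat.card (Set.univ : Set Ω) = n := by
        rw [Nat.card_eq_fintype_card, Fintype.card_congr (Equiv.Set.univ Ω), hn]
      rw [this]
    have hdvdP := blich_aux_prod (P : Subgroup G) Ω F
    rw [hsum] at hdvdP
    rw [← hcast] at hdvdP
    have hPcard : Fintype.card (P : Subgroup G) = p ^ (Nat.card G).factorization p := by
      rw [← Nat.card_eq_fintype_card, hcardP]
    rw [hPcard] at hdvdP
    have : p ^ (Nat.card G).factorization p ∣ ∏ m ∈ F, (n - m) := by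
      exact_mod_cast hdvdP
    rw [Nat.card_eq_fintype_card] at this
    exact (Nat.Prime.pow_dvd_iff_le_factorization hp h0).mp this
  · simp [Nat.factorization_eq_zero_of_not_prime _ hp]
end

section
/- The permutation group G = ⟨(1 2)(3 4), (1 3)(2 4), (1 2)(5 6)⟩ on {1,...,6} has order 8, is isomorphic to the dihedral group of order 8, every involution in G moves exactly four letters (fixes exactly two points), and |G| = 8 does not divide (6 − f₁)···(6 − f_r) when f₁,...,f_r are the distinct fixed-point numbers of elements of prime order only. -/
open MulAction Equiv Finset

/-!
Writing `a, b, c` for the three generators, `ρ = b c` has order 4 and `c ρ c = ρ⁻¹`, so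
`r i ↦ ρ ^ i`, `sr i ↦ c ρ ^ i` is a faithful representation of `D₄` on six letters whose
image is `G`. The involutions of `G` are `ρ²` and the four reflections, and each of them fixes
exactly two letters. As `G` is a `2`-group, its elements of prime order are exactly these
involutions, so the product of the `6 - fᵢ` is `6 - 2 = 4`, which `|G| = 8` does not divide.
-/

theorem Equiv.Perm.natCard_fixedBy {α : Type*} [Fintype α] [DecidableEq α] (σ : Perm α) :
    Nat.card (fixedBy α σ) = #{x | σ x = x} := by
  rw [← Fintype.card_subtype, ← Nat.card_eq_fintype_card]
  rfl

theorem Subgroup.orderOf_eq_of_natCard_eq_prime_pow {G : Type*} [Group G] {H : Subgroup G}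
    {p n : ℕ} (hp : p.Prime) (hH : Nat.card H = p ^ n) {g : G} (hg : g ∈ H)
    (hprime : (orderOf g).Prime) : orderOf g = p :=
  (Nat.prime_dvd_prime_iff_eq hprime hp).1 <|
    hprime.dvd_of_dvd_pow (hH ▸ Subgroup.orderOf_dvd_natCard H hg)

abbrev dihedralReflection : Perm (Fin 6) := swap 0 1 * swap 4 5

abbrev dihedralRotation : Perm (Fin 6) := swap 0 2 * swap 1 3 * dihedralReflection

def dihedralPerm : DihedralGroup 4 →* Perm (Fin 6) where
  toFun x := match x with
    | .r i => dihedralRotation ^ i.val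
    | .sr i => dihedralReflection * dihedralRotation ^ i.val
  map_one' := by decide
  map_mul' := by decide

namespace dihedralPerm

theorem injective : Function.Injective dihedralPerm := by
  unfold Function.Injective
  decide

theorem range_eq_closure : dihedralPerm.range = Subgroup.closure
    {swap 0 1 * swap 2 3, swap 0 2 * swap 1 3, swap 0 1 * swap 4 5} := by
  set K := Subgroup.closure
    ({swap 0 1 * swap 2 3, swap 0 2 * swap 1 3, swap 0 1 * swap 4 5} : Set (Perm (Fin 6)))
  apply le_antisymm
  · have hreflection : dihedralReflection ∈ K := Subgroup.subset_closure (by simp)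
    have hrotation : dihedralRotation ∈ K :=
      mul_mem (Subgroup.subset_closure (by simp)) hreflection
    rintro _ ⟨i | i, rfl⟩
    · exact pow_mem hrotation i.val
    · exact mul_mem hreflection (pow_mem hrotation i.val)
  · rw [Subgroup.closure_le]
    rintro _ (rfl | rfl | rfl) <;> exact MonoidHom.mem_range.2 (by decide)

theorem natCard_fixedBy_of_orderOf_eq_two {x : DihedralGroup 4} (hx : orderOf x = 2) :
    Nat.card (fixedBy (Fin 6) (dihedralPerm x)) = 2 := by
  rw [Perm.natCard_fixedBy]
  rw [orderOf_eq_prime_iff] at hx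
  revert x
  decide

end dihedralPerm

/-- The subgroup `G = ⟨(1 2)(3 4), (1 3)(2 4), (1 2)(5 6)⟩` of `S₆` (on `Fin 6`,
with letters `0,…,5`) has order 8, is isomorphic to the dihedral group of order 8,
every involution in it fixes exactly two of the six letters, and `|G| = 8` does
*not* divide `∏ (6 - fᵢ)` where the `fᵢ` are the distinct fixed-point numbers of
elements of prime order. -/
theorem blichfeldt_fails_for_prime_order
    (G : Subgroup (Equiv.Perm (Fin 6)))
    (hG : G = Subgroup.closure
      { Equiv.swap 0 1 * Equiv.swap 2 3,
        Equiv.swap 0 2 * Equiv.swap 1 3,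
        Equiv.swap 0 1 * Equiv.swap 4 5 })
    (F : Finset ℕ)
    (hF : ∀ m : ℕ, m ∈ F ↔ ∃ g ∈ G, (orderOf g).Prime ∧
      Nat.card (fixedBy (Fin 6) g) = m) :
    Nat.card G = 8 ∧ Nonempty (G ≃* DihedralGroup 4) ∧
      (∀ g ∈ G, orderOf g = 2 → Nat.card (fixedBy (Fin 6) g) = 2) ∧
      ¬ Nat.card G ∣ ∏ m ∈ F, (6 - m) := by
  rw [← dihedralPerm.range_eq_closure] at hG
  let e : DihedralGroup 4 ≃* G :=
    (MonoidHom.ofInjective dihedralPerm.injective).trans (MulEquiv.subgroupCongr hG.symm)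
  have hcard : Nat.card G = 8 := by
    rw [← Nat.card_congr e.toEquiv, Nat.card_eq_fintype_card, DihedralGroup.card]
  have hinvolution : ∀ g ∈ G, orderOf g = 2 → Nat.card (fixedBy (Fin 6) g) = 2 := by
    rintro _ hg hg2
    obtain ⟨x, rfl⟩ := hG ▸ hg
    rw [orderOf_injective _ dihedralPerm.injective] at hg2
    exact dihedralPerm.natCard_fixedBy_of_orderOf_eq_two hg2
  have hF2 : F = {2} := by
    ext m
    rw [hF, mem_singleton]
    constructor
    · rintro ⟨g, hg, hprime, rfl⟩
      exact hinvolution g hg <|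
        G.orderOf_eq_of_natCard_eq_prime_pow (n := 3) Nat.prime_two hcard hg hprime
    · rintro rfl
      have hreflection : dihedralReflection ∈ G := hG ▸ ⟨.sr 0, rfl⟩
      have horder : orderOf dihedralReflection = 2 := orderOf_eq_prime (by decide) (by decide)
      exact ⟨_, hreflection, horder ▸ Nat.prime_two, hinvolution _ hreflection horder⟩
  refine ⟨hcard, ⟨e.symm⟩, hinvolution, ?_⟩
  rw [hF2, hcard]
  decide
end

section
/- Let G be a finite group acting on a finite set Ω, with orbits Δ₁,...,Δ_s and representatives ωᵢ ∈ Δᵢ. Then for every k ≥ 1, (1/|G|)∑_{g∈G} f(g)^k = ∑_{i=1}^s (1/|G_{ωᵢ}|) ∑_{h∈G_{ωᵢ}} f(h)^{k−1}, where G_ω denotes the stabilizer of ω and f the fixed-point counting function. -/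
open MulAction

open Finset in
open scoped Classical in
private lemma blich_card_fixedBy_conj {G : Type*} [Group G] {Ω : Type*} [MulAction G Ω]
    (a h : G) : Nat.card (fixedBy Ω (a * h * a⁻¹)) = Nat.card (fixedBy Ω h) := by
  rw [← MulAction.smul_fixedBy Ω h a]
  exact Nat.card_image_of_injective (MulAction.injective a) _

open Finset in
open scoped Classical in
private lemma blich_stab_sum_const {G : Type*} [Group G] [Fintype G] {Ω : Type*}
    [MulAction G Ω] (m : ℕ) (a : G) (x : Ω) :
    (∑ h : stabilizer G (a • x), (Nat.card (fixedBy Ω (h : G)) : ℚ) ^ m) =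
      ∑ h : stabilizer G x, (Nat.card (fixedBy Ω (h : G)) : ℚ) ^ m := by
  let e : stabilizer G x ≃ stabilizer G (a • x) :=
    { toFun := fun h => ⟨a * h * a⁻¹, by
        have hh : (h : G) • x = x := h.2
        rw [mem_stabilizer_iff, mul_smul, mul_smul, inv_smul_smul, hh]⟩
      invFun := fun g => ⟨a⁻¹ * g * a, by
        have hg : (g : G) • (a • x) = a • x := g.2
        rw [mem_stabilizer_iff, mul_smul, mul_smul, hg, inv_smul_smul]⟩
      left_inv := fun h => by ext; simp [mul_assoc]
      right_inv := fun g => by ext; simp [mul_assoc] }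
  rw [← Equiv.sum_comp e]
  refine Fintype.sum_congr _ _ fun h => ?_
  show ((Nat.card (fixedBy Ω (a * (h : G) * a⁻¹)) : ℚ)) ^ m = _
  rw [blich_card_fixedBy_conj]

open Finset in
open scoped Classical in
/-- The recursion `F_k(G) = ∑ᵢ F_{k-1}(G_{ωᵢ})`: for orbit representatives
`ωᵢ` (one for each orbit `Δᵢ`), and `k ≥ 1`,
`(1/|G|)∑_{g∈G} f(g)^k = ∑ᵢ (1/|G_{ωᵢ}|) ∑_{h∈G_{ωᵢ}} f(h)^{k-1}`. -/
theorem blichfeldt_recursion (G : Type*) [Group G] [Fintype G]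
    (Ω : Type*) [Fintype Ω] [MulAction G Ω] (k : ℕ) (hk : 1 ≤ k)
    (ω : Quotient (orbitRel G Ω) → Ω) (hω : ∀ i, ⟦ω i⟧ = i) :
    (∑ g : G, (Nat.card (fixedBy Ω g) : ℚ) ^ k) / Fintype.card G =
      ∑ i : Quotient (orbitRel G Ω),
        (∑ h : stabilizer G (ω i), (Nat.card (fixedBy Ω (h : G)) : ℚ) ^ (k - 1)) /
          Nat.card (stabilizer G (ω i)) := by
  set f : G → ℚ := fun g => (Nat.card (fixedBy Ω g) : ℚ) with hf
  set T : Ω → ℚ := fun x => ∑ h : stabilizer G x, f (h : G) ^ (k - 1) with hT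
  -- Step 1: f g = number of fixed points as a sum of indicators
  have hfix : ∀ g : G, f g = ∑ x : Ω, if g • x = x then (1 : ℚ) else 0 := by
    intro g
    show ((Nat.card (fixedBy Ω g) : ℚ)) = _
    rw [Nat.card_eq_fintype_card, ← Set.toFinset_card, ← Finset.sum_filter]
    simp only [Finset.sum_const, nsmul_eq_mul, mul_one]
    congr 2
    ext x
    simp [Set.mem_toFinset, MulAction.mem_fixedBy]
  -- Step 2: the double counting
  have step1 : (∑ g : G, f g ^ k) = ∑ x : Ω, T x := by
    have key : ∀ g : G, f g ^ k = ∑ x : Ω, if g • x = x then f g ^ (k - 1) else 0 := by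
      intro g
      have : f g ^ k = f g ^ (k - 1) * f g := by
        conv_lhs => rw [show k = (k - 1) + 1 from (Nat.succ_pred_eq_of_pos hk).symm]
        rw [pow_succ]
      rw [this, hfix g, Finset.mul_sum]
      refine Finset.sum_congr rfl fun x _ => ?_
      split <;> simp
    simp_rw [key]
    rw [Finset.sum_comm]
    refine Finset.sum_congr rfl fun x _ => ?_
    rw [← Finset.sum_filter]
    show _ = ∑ h : stabilizer G x, f (h : G) ^ (k - 1)
    rw [← Finset.sum_subtype (Finset.univ.filter fun g : G => g • x = x)
      (fun g => by simp [mem_stabilizer_iff]) (fun g : G => f g ^ (k - 1))]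
  -- Step 3: group by orbits
  have step2 : (∑ x : Ω, T x) =
      ∑ i : Quotient (orbitRel G Ω),
        (Finset.univ.filter fun x : Ω => ⟦x⟧ = i).card • T (ω i) := by
    rw [← Finset.sum_fiberwise Finset.univ (fun x : Ω => (⟦x⟧ : Quotient (orbitRel G Ω))) T]
    refine Finset.sum_congr rfl fun i _ => ?_
    rw [← Finset.sum_const]
    refine Finset.sum_congr rfl fun x hx => ?_
    have hxi : (⟦x⟧ : Quotient (orbitRel G Ω)) = i := (Finset.mem_filter.1 hx).2
    have hrel : orbitRel G Ω x (ω i) := Quotient.exact (hxi.trans (hω i).symm)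
    obtain ⟨a, ha⟩ := MulAction.orbitRel_apply.1 hrel
    rw [hT]
    simp only
    rw [← ha, blich_stab_sum_const]
  -- Step 4: orbit counting
  have horb : ∀ i : Quotient (orbitRel G Ω),
      ((Finset.univ.filter fun x : Ω => ⟦x⟧ = i).card : ℚ) *
        (Nat.card (stabilizer G (ω i)) : ℚ) = Fintype.card G := by
    intro i
    have hcard : (Finset.univ.filter fun x : Ω => ⟦x⟧ = i).card =
        Fintype.card (orbit G (ω i)) := by
      rw [Fintype.card_of_finset' ((Finset.univ.filter fun x : Ω => ⟦x⟧ = i) : Finset Ω)]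
      intro x
      simp only [Finset.mem_filter, Finset.mem_univ, true_and]
      constructor
      · intro h
        exact MulAction.orbitRel_apply.1 (Quotient.exact (h.trans (hω i).symm))
      · intro h
        exact (Quotient.sound (MulAction.orbitRel_apply.2 h)).trans (hω i)
    rw [hcard, Nat.card_eq_fintype_card]
    exact_mod_cast congrArg (Nat.cast (R := ℚ))
      (MulAction.card_orbit_mul_card_stabilizer_eq_card_group G (ω i))
  -- Conclude
  rw [step1, step2, Finset.sum_div]
  refine Finset.sum_congr rfl fun i _ => ?_
  have hstabpos : (0 : ℚ) < Nat.card (stabilizer G (ω i)) := by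
    have : 0 < Nat.card (stabilizer G (ω i)) := Nat.card_pos
    exact_mod_cast this
  have hGpos : (0 : ℚ) < Fintype.card G := by exact_mod_cast Fintype.card_pos
  rw [nsmul_eq_mul, div_eq_div_iff hGpos.ne' hstabpos.ne']
  rw [mul_comm ((Finset.univ.filter fun x : Ω => ⟦x⟧ = i).card : ℚ) (T (ω i)), mul_assoc,
    horb i, mul_comm]
end
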